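/- arXiv:2102.07722 — 5 statements merged into one kernel-verified Lean document; each statement's English description precedes it below -/
import Mathlib

section
/- Let a = (a_n) be a sequence of nonnegative real numbers with a_n = O(n^d) for some natural number d. There exists a real number β > 1 such that ∑_{n≥0} a_n / β^{n+1} = 1 if and only if ∑_{n≥0} a_n > 1 (where the sum may be +∞). Moreover, in that case β is unique. -/
open Filter

/-- Product of the first `n+1` terms of the base sequence. -/
noncomputable def cprod (β : ℕ → ℝ) (n : ℕ) : ℝ := ∏ i ∈ Finset.range (n+1), β i

/-- A Cantor real base: all terms exceed 1 and the partial products tend to infinity. -/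
def IsCantorBase (β : ℕ → ℝ) : Prop :=
  (∀ n, 1 < β n) ∧ Tendsto (cprod β) atTop atTop

/-- Value of a real-digit sequence in a Cantor base. -/
noncomputable def valB (β : ℕ → ℝ) (a : ℕ → ℝ) : ℝ := ∑' n, a n / cprod β n

/-- Value of a natural-digit sequence in a Cantor base. -/
noncomputable def valN (β : ℕ → ℝ) (a : ℕ → ℕ) : ℝ := valB β (fun n => (a n : ℝ))

/-- Remainders of the greedy algorithm. -/
noncomputable def greedyRem (β : ℕ → ℝ) (x : ℝ) : ℕ → ℝ
  | 0 => β 0 * x - ⌊β 0 * x⌋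
  | n+1 => β (n+1) * greedyRem β x n - ⌊β (n+1) * greedyRem β x n⌋

/-- Digits of the greedy expansion. -/
noncomputable def greedy (β : ℕ → ℝ) (x : ℝ) : ℕ → ℕ
  | 0 => (⌊β 0 * x⌋).toNat
  | n+1 => (⌊β (n+1) * greedyRem β x n⌋).toNat

/-- Remainders of the quasi-greedy algorithm started at `1`:
at each step the largest digit keeping the remainder strictly positive is chosen. -/
noncomputable def qRem (β : ℕ → ℝ) : ℕ → ℝ
  | 0 => β 0 - (⌈β 0⌉ - 1)
  | n+1 => β (n+1) * qRem β n - (⌈β (n+1) * qRem β n⌉ - 1)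

/-- Digits of the quasi-greedy expansion of `1`. -/
noncomputable def quasiGreedy (β : ℕ → ℝ) : ℕ → ℕ
  | 0 => (⌈β 0⌉ - 1).toNat
  | n+1 => (⌈β (n+1) * qRem β n⌉ - 1).toNat

/-- The `n`-shifted base `β^{(n)}`. -/
def shiftBase (β : ℕ → ℝ) (n : ℕ) : ℕ → ℝ := fun k => β (n + k)

/-- The `n`-fold shift `σ^n` of a digit sequence. -/
def shiftSeq (a : ℕ → ℕ) (n : ℕ) : ℕ → ℕ := fun k => a (n + k)

/-- Strict lexicographic order on digit sequences. -/
def LexLt (a b : ℕ → ℕ) : Prop := ∃ ℓ, (∀ k, k < ℓ → a k = b k) ∧ a ℓ < b ℓ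

/-- Lexicographic order on digit sequences. -/
def LexLe (a b : ℕ → ℕ) : Prop := LexLt a b ∨ a = b

/-- The set of greedy expansions of points of `[0,1)`. -/
def Dset (β : ℕ → ℝ) : Set (ℕ → ℕ) := {a | ∃ x ∈ Set.Ico (0:ℝ) 1, a = greedy β x}

/-! `val_β(a) = ∑ aₙ / β^(n+1)` is continuous and strictly decreasing in `β > 1` as soon as some
`aₙ > 0`; it exceeds `1` near `β = 1` exactly when `∑ aₙ > 1` (compare with a finite partial sum)
and tends to `0` as `β → ∞`, so the intermediate value theorem gives a unique root of
`val_β(a) = 1`. The growth bound `aₙ = O(n^d)` makes every such series converge. Conversely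
`β · val_β(a) ≤ ∑ aₙ`, so `val_β(a) = 1` forces `∑ aₙ ≥ β > 1`. -/

open Topology

noncomputable def baseVal (a : ℕ → ℝ) (β : ℝ) : ℝ := ∑' n, a n / β ^ (n + 1)

section baseVal

variable {a : ℕ → ℝ} {b β γ : ℝ}

theorem summable_div_pow_of_isBigO_pow {d : ℕ} (hO : a =O[atTop] fun n : ℕ => (n : ℝ) ^ d)
    (hβ : 1 < β) : Summable fun n => a n / β ^ (n + 1) := by
  have hr : ‖β⁻¹‖ < 1 := by
    rw [norm_inv, Real.norm_of_nonneg (by linarith)]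
    exact inv_lt_one_of_one_lt₀ hβ
  refine summable_of_isBigO_nat ((summable_pow_mul_geometric_of_norm_lt_one d hr).mul_right β⁻¹) ?_
  refine (hO.mul (Asymptotics.isBigO_refl (fun n : ℕ => β⁻¹ ^ n * β⁻¹) atTop)).congr
    (fun n => ?_) (fun n => by ring)
  rw [div_eq_mul_inv, ← inv_pow, pow_succ]

theorem baseVal_lt_baseVal (ha : ∀ n, 0 ≤ a n) (hpos : ∃ n, 0 < a n) (hβ : 0 < β)
    (hβγ : β < γ) (hs : Summable fun n => a n / β ^ (n + 1)) : baseVal a γ < baseVal a β := by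
  obtain ⟨m, hm⟩ := hpos
  have hγ : 0 < γ := hβ.trans hβγ
  refine Summable.tsum_lt_tsum_of_nonneg (i := m) (fun n => by positivity [ha n])
    (fun n => ?_) ?_ hs
  · exact div_le_div_of_nonneg_left (ha n) (by positivity) (by gcongr)
  · exact div_lt_div_of_pos_left hm (by positivity) (by gcongr)

theorem continuousOn_baseVal (ha : ∀ n, 0 ≤ a n) (hb : 0 < b)
    (hs : Summable fun n => a n / b ^ (n + 1)) : ContinuousOn (baseVal a) (Set.Ici b) := by
  refine continuousOn_tsum (fun n => ?_) hs (fun n x (hx : b ≤ x) => ?_)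
  · exact continuousOn_const.div (continuousOn_pow _) fun x (hx : b ≤ x) =>
      (pow_pos (hb.trans_le hx) _).ne'
  · have hx0 : 0 < x := hb.trans_le hx
    rw [Real.norm_of_nonneg (by positivity [ha n])]
    exact div_le_div_of_nonneg_left (ha n) (by positivity) (pow_le_pow_left₀ hb.le hx _)

theorem baseVal_le_div_mul_baseVal (ha : ∀ n, 0 ≤ a n) (hb : 0 < b) (hbβ : b ≤ β)
    (hs : Summable fun n => a n / b ^ (n + 1)) : baseVal a β ≤ b / β * baseVal a b := by
  have hβ : 0 < β := hb.trans_le hbβ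
  have hle (n : ℕ) : a n / β ^ (n + 1) ≤ b / β * (a n / b ^ (n + 1)) := by
    rw [div_mul_div_comm, div_le_div_iff₀ (by positivity) (by positivity)]
    calc a n * (β * b ^ (n + 1)) = a n * β * b * b ^ n := by ring
      _ ≤ a n * β * b * β ^ n := by gcongr; positivity [ha n]
      _ = b * a n * β ^ (n + 1) := by ring
  rw [baseVal, baseVal, ← tsum_mul_left]
  exact (Summable.of_nonneg_of_le (fun n => by positivity [ha n]) hle
    (hs.mul_left (b / β))).tsum_le_tsum hle (hs.mul_left (b / β))

theorem exists_le_baseVal_lt_one (ha : ∀ n, 0 ≤ a n)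
    (hs : Summable fun n => a n / 2 ^ (n + 1)) (b : ℝ) : ∃ β, b ≤ β ∧ baseVal a β < 1 := by
  have hC : 0 ≤ baseVal a 2 := tsum_nonneg fun n => by positivity [ha n]
  set β := max b 0 + 2 * baseVal a 2 + 2
  have hb : b ≤ max b 0 := le_max_left b 0
  have h0 : 0 ≤ max b 0 := le_max_right b 0
  refine ⟨β, by linarith, ?_⟩
  calc baseVal a β ≤ 2 / β * baseVal a 2 :=
        baseVal_le_div_mul_baseVal ha two_pos (by linarith) hs
    _ < 1 := by
      rw [div_mul_eq_mul_div, div_lt_one (by linarith)]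
      linarith

theorem exists_one_lt_baseVal (ha : ∀ n, 0 ≤ a n)
    (hs : ∀ β, 1 < β → Summable fun n => a n / β ^ (n + 1))
    (h : 1 < ∑' n, ENNReal.ofReal (a n)) : ∃ β, 1 < β ∧ 1 < baseVal a β := by
  rw [ENNReal.tsum_eq_iSup_sum, lt_iSup_iff] at h
  obtain ⟨s, hs1⟩ := h
  rw [← ENNReal.ofReal_sum_of_nonneg fun i _ => ha i, ENNReal.one_lt_ofReal] at hs1
  have hcont : ContinuousAt (fun x : ℝ => ∑ i ∈ s, a i / x ^ (i + 1)) 1 := by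
    fun_prop (disch := norm_num)
  have hnear : ∀ᶠ x in 𝓝[>] (1 : ℝ), 1 < ∑ i ∈ s, a i / x ^ (i + 1) :=
    nhdsWithin_le_nhds (hcont.eventually_const_lt (by simpa using hs1))
  obtain ⟨β, hβs, hβ⟩ := (hnear.and self_mem_nhdsWithin).exists
  exact ⟨β, hβ, hβs.trans_le <| (hs β hβ).sum_le_tsum s fun i _ => by
    have : (0 : ℝ) < β := one_pos.trans hβ
    positivity [ha i]⟩

theorem ofReal_mul_baseVal_le (ha : ∀ n, 0 ≤ a n) (hβ : 1 ≤ β)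
    (hs : Summable fun n => a n / β ^ (n + 1)) :
    ENNReal.ofReal (β * baseVal a β) ≤ ∑' n, ENNReal.ofReal (a n) := by
  have hβ0 : 0 < β := one_pos.trans_le hβ
  rw [baseVal, ← tsum_mul_left, ENNReal.ofReal_tsum_of_nonneg (fun n => by positivity [ha n])
    (hs.mul_left β)]
  refine ENNReal.tsum_le_tsum fun n => ENNReal.ofReal_le_ofReal ?_
  rw [pow_succ', ← mul_div_assoc, mul_div_mul_left _ _ hβ0.ne']
  exact div_le_self (ha n) (one_le_pow₀ hβ)

end baseVal

theorem stmt_0 (a : ℕ → ℝ) (ha : ∀ n, 0 ≤ a n) (d : ℕ)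
    (hO : a =O[atTop] (fun n : ℕ => (n : ℝ) ^ d)) :
    ((∃ β : ℝ, 1 < β ∧ ∑' n : ℕ, a n / β ^ (n + 1) = 1) ↔
      1 < ∑' n : ℕ, ENNReal.ofReal (a n)) ∧
    (∀ β γ : ℝ, 1 < β → (∑' n : ℕ, a n / β ^ (n + 1)) = 1 →
      1 < γ → (∑' n : ℕ, a n / γ ^ (n + 1)) = 1 → β = γ) := by
  have hs : ∀ β, 1 < β → Summable fun n => a n / β ^ (n + 1) :=
    fun β => summable_div_pow_of_isBigO_pow hO
  have hpos (β : ℝ) (h : baseVal a β = 1) : ∃ n, 0 < a n := by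
    by_contra! h0
    simp [baseVal, fun n => le_antisymm (h0 n) (ha n)] at h
  refine ⟨⟨fun ⟨β, hβ, h1⟩ => ?_, fun h => ?_⟩, fun β γ hβ hβ1 hγ hγ1 => ?_⟩
  · calc (1 : ENNReal) < ENNReal.ofReal (β * baseVal a β) := by
          rw [baseVal, h1, mul_one, ENNReal.one_lt_ofReal]; exact hβ
      _ ≤ _ := ofReal_mul_baseVal_le ha hβ.le (hs β hβ)
  · obtain ⟨b, hb, hb1⟩ := exists_one_lt_baseVal ha hs h
    obtain ⟨B, hbB, hB1⟩ := exists_le_baseVal_lt_one ha (hs 2 one_lt_two) b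
    obtain ⟨β, hβ, hβ1⟩ := intermediate_value_Icc' hbB
      ((continuousOn_baseVal ha (one_pos.trans hb) (hs b hb)).mono Set.Icc_subset_Ici_self)
      ⟨hB1.le, hb1.le⟩
    exact ⟨β, hb.trans_le hβ.1, hβ1⟩
  · by_contra hne
    rcases lt_or_gt_of_ne hne with h | h
    · exact (baseVal_lt_baseVal ha (hpos β hβ1) (one_pos.trans hβ) h (hs β hβ)).ne
        (hγ1.trans hβ1.symm)
    · exact (baseVal_lt_baseVal ha (hpos γ hγ1) (one_pos.trans hγ) h (hs γ hγ)).ne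
        (hβ1.trans hγ1.symm)
end

section
/- Let a = (a_n) be a sequence of nonnegative real numbers such that ∑_{n≥0} a_n = +∞. Then there exists a sequence β = (β_n) of real numbers each greater than 1 with ∏_{n≥0} β_n = +∞ such that ∑_{n≥0} a_n / ∏_{i=0}^n β_i = 1. -/
/-!
Rescaling reduces the problem to finding a strictly increasing sequence `Q → ∞` with
`1 < Q 0 · T`, where `T = ∑ aₙ / Qₙ`: the sequence `T · Q` is then the sequence of partial
products of a Cantor base for which `a` has value `1`. With `Sₙ` the partial sums of `a`, take
`Qₙ = 1 + 2ⁿ (Sₙ + 1) / (2ᴺ (S_N + 1))`. The factor `2ⁿ (Sₙ + 1) ≥ 2ⁿ aₙ` makes the series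
converge, and since `Qₙ ≤ 2` for `n ≤ N`, choosing `N` with `S_N > 2`, which is possible
because `∑ aₙ = ∞`, forces `T > 1`.
-/

open Filter

open Finset

noncomputable def baseOfProd (P : ℕ → ℝ) : ℕ → ℝ
  | 0 => P 0
  | n + 1 => P (n + 1) / P n

theorem cprod_baseOfProd {P : ℕ → ℝ} (hP : ∀ n, P n ≠ 0) : cprod (baseOfProd P) = P := by
  funext n
  induction n with
  | zero => simp [cprod, baseOfProd]
  | succ n ih =>
    rw [cprod, prod_range_succ, ← cprod, ih, baseOfProd, mul_div_cancel₀ _ (hP n)]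

theorem isCantorBase_baseOfProd {P : ℕ → ℝ} (h0 : 1 < P 0) (hP : StrictMono P)
    (htop : Tendsto P atTop atTop) : IsCantorBase (baseOfProd P) := by
  have hpos : ∀ n, 0 < P n := fun n => by linarith [hP.monotone n.zero_le]
  refine ⟨fun n => ?_, by rwa [cprod_baseOfProd fun n => (hpos n).ne']⟩
  cases n with
  | zero => exact h0
  | succ n => exact (one_lt_div (hpos n)).2 (hP n.lt_succ_self)

theorem exists_isCantorBase_valB_eq_one {a Q : ℕ → ℝ} (hQ : StrictMono Q) (hQ0 : 0 < Q 0)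
    (hQtop : Tendsto Q atTop atTop) (hT : 1 < Q 0 * ∑' n, a n / Q n) :
    ∃ β, IsCantorBase β ∧ valB β a = 1 := by
  set T := ∑' n, a n / Q n
  have hT0 : 0 < T := pos_of_mul_pos_right (one_pos.trans hT) hQ0.le
  have hQpos : ∀ n, 0 < Q n := fun n => hQ0.trans_le (hQ.monotone n.zero_le)
  refine ⟨baseOfProd fun n => T * Q n,
    isCantorBase_baseOfProd (by rwa [mul_comm]) (hQ.const_mul hT0) (hQtop.const_mul_atTop hT0), ?_⟩
  rw [valB, cprod_baseOfProd fun n => (mul_pos hT0 (hQpos n)).ne']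
  simp_rw [mul_comm T, ← div_div]
  rw [tsum_div_const, div_self hT0.ne']

section Growth

variable {a : ℕ → ℝ}

noncomputable def growth (a : ℕ → ℝ) (n : ℕ) : ℝ := 2 ^ n * (∑ i ∈ range (n + 1), a i + 1)

variable (ha : ∀ n, 0 ≤ a n)
include ha

theorem one_le_partialSum_add_one (n : ℕ) : 1 ≤ ∑ i ∈ range (n + 1), a i + 1 := by
  linarith [sum_nonneg fun i (_ : i ∈ range (n + 1)) => ha i]

theorem pow_two_le_growth (n : ℕ) : 2 ^ n ≤ growth a n :=
  le_mul_of_one_le_right (by positivity) (one_le_partialSum_add_one ha n)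

theorem growth_pos (n : ℕ) : 0 < growth a n :=
  (pow_pos two_pos n).trans_le (pow_two_le_growth ha n)

theorem strictMono_growth : StrictMono (growth a) := by
  refine strictMono_nat_of_lt_succ fun n => ?_
  have hS := one_le_partialSum_add_one ha n
  rw [growth, growth, sum_range_succ _ (n + 1), pow_succ]
  nlinarith [ha (n + 1), pow_pos (two_pos : (0 : ℝ) < 2) n]

theorem div_growth_le (n : ℕ) : a n / growth a n ≤ (1 / 2) ^ n := by
  have hS : a n ≤ ∑ i ∈ range (n + 1), a i :=
    single_le_sum (fun i _ => ha i) (self_mem_range_succ n)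
  rw [div_le_iff₀ (growth_pos ha n), growth, one_div_pow, ← mul_assoc,
    one_div_mul_cancel (by positivity), one_mul]
  linarith

theorem exists_strictMono_summable_div (N : ℕ) :
    ∃ Q : ℕ → ℝ, StrictMono Q ∧ Tendsto Q atTop atTop ∧ (∀ n, 1 ≤ Q n) ∧
      (∀ n ≤ N, Q n ≤ 2) ∧ Summable fun n => a n / Q n := by
  have hGN := growth_pos ha N
  have hG : ∀ n, 0 ≤ growth a n / growth a N := fun n => div_nonneg (growth_pos ha n).le hGN.le
  refine ⟨fun n => 1 + growth a n / growth a N, ?_, ?_, fun n => ?_, fun n hn => ?_, ?_⟩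
  · exact fun m n hmn => add_lt_add_right
      (div_lt_div_of_pos_right (strictMono_growth ha hmn) hGN) 1
  · refine tendsto_atTop_add_const_left _ 1 (Tendsto.atTop_div_const hGN ?_)
    exact tendsto_atTop_mono (pow_two_le_growth ha)
      (tendsto_pow_atTop_atTop_of_one_lt one_lt_two)
  · linarith [hG n]
  · linarith [(div_le_one hGN).2 ((strictMono_growth ha).monotone hn)]
  · refine Summable.of_nonneg_of_le (fun n => div_nonneg (ha n) (by linarith [hG n]))
      (fun n => ?_) (summable_geometric_two.mul_left (growth a N))
    calc a n / (1 + growth a n / growth a N)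
        ≤ a n / (growth a n / growth a N) :=
          div_le_div_of_nonneg_left (ha n) (div_pos (growth_pos ha n) hGN) (by linarith)
      _ = growth a N * (a n / growth a n) := by field_simp
      _ ≤ growth a N * (1 / 2) ^ n := mul_le_mul_of_nonneg_left (div_growth_le ha n) hGN.le

end Growth

theorem stmt_2 (a : ℕ → ℝ) (ha : ∀ n, 0 ≤ a n)
    (hdiv : (∑' n : ℕ, ENNReal.ofReal (a n)) = ⊤) :
    ∃ β : ℕ → ℝ, IsCantorBase β ∧ valB β a = 1 := by
  have hnot : ¬ Summable a := fun h =>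
    ENNReal.ofReal_ne_top ((ENNReal.ofReal_tsum_of_nonneg ha h).trans hdiv)
  obtain ⟨N, hN⟩ :=
    ((not_summable_iff_tendsto_nat_atTop_of_nonneg ha).1 hnot |>.eventually_gt_atTop 2).exists
  obtain ⟨Q, hQ, hQtop, hQ1, hQ2, hsum⟩ := exists_strictMono_summable_div ha N
  have hQpos : ∀ n, 0 < Q n := fun n => one_pos.trans_le (hQ1 n)
  have hT : 1 < ∑' n, a n / Q n := calc
    1 < ∑ n ∈ range N, a n / 2 := by rw [← sum_div]; linarith
    _ ≤ ∑ n ∈ range N, a n / Q n := sum_le_sum fun n hn =>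
      div_le_div_of_nonneg_left (ha n) (hQpos n) (hQ2 n (mem_range.1 hn).le)
    _ ≤ ∑' n, a n / Q n := hsum.sum_le_tsum _ fun n _ => div_nonneg (ha n) (hQpos n).le
  exact exists_isCantorBase_valB_eq_one hQ (hQpos 0) hQtop (one_lt_mul_of_le_of_lt (hQ1 0) hT)
end

section
/- Let a = (a_n) be a sequence of nonnegative real numbers. There exists a Cantor real base β = (β_n) such that ∑_{n≥0} a_n / ∏_{i=0}^n β_i = 1 if and only if ∑_{n≥0} a_n > 1 (where the sum may be +∞). -/
/-!
If `val_β(a) = 1` with all `βₙ > 1`, then `aₙ / ∏_{i ≤ n} βᵢ ≤ aₙ`, strictly wherever `aₙ > 0`,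
so `∑ aₙ > 1`. Conversely, a Cantor base amounts to its sequence of partial products `pₙ`,
which can be any strictly increasing unbounded sequence with `p₀ > 1`, and then
`val_β(a) = ∑ aₙ / pₙ`. Choose `N` with `∑_{n<N} aₙ > 1` and `r > 1` with `r^N < ∑_{n<N} aₙ`;
the weights `qₙ = rⁿ (1 + ∑_{N ≤ k ≤ n} aₖ)` are strictly increasing and unbounded, and
`S = ∑ aₙ / qₙ` converges and exceeds `1`. Then `pₙ = S qₙ` gives value exactly `1`.
-/

open Filter

open Topology

namespace CantorBase

lemma one_lt_cprod {β : ℕ → ℝ} (hβ : ∀ n, 1 < β n) (n : ℕ) : 1 < cprod β n := by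
  induction n with
  | zero => simpa [cprod] using hβ 0
  | succ m ih =>
    have h : cprod β (m + 1) = cprod β m * β (m + 1) := Finset.prod_range_succ _ _
    rw [h]
    nlinarith [hβ (m + 1)]

lemma one_lt_tsum_ofReal_of_valB_eq_one {β a : ℕ → ℝ} (ha : ∀ n, 0 ≤ a n) (hβ : ∀ n, 1 < β n)
    (hval : valB β a = 1) : 1 < ∑' n, ENNReal.ofReal (a n) := by
  have hsum : Summable fun n => a n / cprod β n := by
    by_contra h
    rw [valB, tsum_eq_zero_of_not_summable h] at hval
    exact zero_ne_one hval
  obtain ⟨n₀, hn₀⟩ : ∃ n, 0 < a n := by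
    by_contra! h
    have h0 : ∀ n, a n = 0 := fun n => le_antisymm (h n) (ha n)
    simp [valB, h0] at hval
  have hterm_nonneg n : 0 ≤ a n / cprod β n :=
    div_nonneg (ha n) (one_pos.trans (one_lt_cprod hβ n)).le
  have hval' : ∑' n, ENNReal.ofReal (a n / cprod β n) = 1 := by
    rw [← ENNReal.ofReal_tsum_of_nonneg hterm_nonneg hsum, ← valB, hval, ENNReal.ofReal_one]
  rw [← hval']
  refine ENNReal.tsum_lt_tsum (i := n₀) (hval' ▸ ENNReal.one_ne_top) (fun n => ?_) ?_
  · exact ENNReal.ofReal_le_ofReal (div_le_self (ha n) (one_lt_cprod hβ n).le)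
  · exact (ENNReal.ofReal_lt_ofReal_iff hn₀).2 (div_lt_self hn₀ (one_lt_cprod hβ n₀))

noncomputable def ratioBase (p : ℕ → ℝ) : ℕ → ℝ
  | 0 => p 0
  | n + 1 => p (n + 1) / p n

lemma cprod_ratioBase {p : ℕ → ℝ} (hp : ∀ n, p n ≠ 0) : cprod (ratioBase p) = p := by
  funext n
  induction n with
  | zero => simp [cprod, ratioBase]
  | succ m ih =>
    rw [cprod, Finset.prod_range_succ, ← cprod, ih, ratioBase, mul_div_cancel₀ _ (hp m)]

lemma isCantorBase_ratioBase {p : ℕ → ℝ} (h0 : 1 < p 0) (hp : StrictMono p)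
    (htop : Tendsto p atTop atTop) : IsCantorBase (ratioBase p) := by
  have hpos n : 0 < p n := by linarith [hp.monotone (Nat.zero_le n)]
  refine ⟨fun n => ?_, by rwa [cprod_ratioBase fun n => (hpos n).ne']⟩
  cases n with
  | zero => exact h0
  | succ m => exact (one_lt_div (hpos m)).2 (hp m.lt_succ_self)

lemma exists_sum_range_gt_of_one_lt_tsum {a : ℕ → ℝ} (ha : ∀ n, 0 ≤ a n)
    (h : 1 < ∑' n, ENNReal.ofReal (a n)) : ∃ N, 1 < ∑ n ∈ Finset.range N, a n := by
  obtain ⟨N, hN⟩ :=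
    (ENNReal.summable.hasSum.tendsto_sum_nat.eventually (eventually_gt_nhds h)).exists
  refine ⟨N, ?_⟩
  rwa [← ENNReal.ofReal_sum_of_nonneg (fun n _ => ha n), ENNReal.one_lt_ofReal] at hN

/-- The factor `1 + ∑_{N ≤ k ≤ n} aₖ ≥ aₙ` makes `∑ aₙ / weight a N r n` converge without
changing the terms below `N`. -/
noncomputable def weight (a : ℕ → ℝ) (N : ℕ) (r : ℝ) (n : ℕ) : ℝ :=
  r ^ n * (1 + ∑ k ∈ Finset.Ico N (n + 1), a k)

section weight

variable {a : ℕ → ℝ} {N : ℕ} {r : ℝ}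

lemma weight_of_lt {n : ℕ} (hn : n < N) : weight a N r n = r ^ n := by
  simp [weight, Finset.Ico_eq_empty_of_le (by omega : N ≥ n + 1)]

lemma pow_le_weight (ha : ∀ n, 0 ≤ a n) (hr : 0 ≤ r) (n : ℕ) : r ^ n ≤ weight a N r n :=
  le_mul_of_one_le_right (pow_nonneg hr n)
    (le_add_of_nonneg_right (Finset.sum_nonneg fun k _ => ha k))

lemma weight_pos (ha : ∀ n, 0 ≤ a n) (hr : 0 < r) (n : ℕ) : 0 < weight a N r n :=
  (pow_pos hr n).trans_le (pow_le_weight ha hr.le n)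

lemma weight_strictMono (ha : ∀ n, 0 ≤ a n) (hr : 1 < r) : StrictMono (weight a N r) := by
  refine strictMono_nat_of_lt_succ fun n => ?_
  have hsum_mono : ∑ k ∈ Finset.Ico N (n + 1), a k ≤ ∑ k ∈ Finset.Ico N (n + 2), a k :=
    Finset.sum_le_sum_of_subset_of_nonneg (Finset.Ico_subset_Ico_right (by omega))
      fun k _ _ => ha k
  have hsum_nonneg : 0 ≤ ∑ k ∈ Finset.Ico N (n + 1), a k := Finset.sum_nonneg fun k _ => ha k
  have hpow : r ^ n < r ^ (n + 1) := pow_lt_pow_right₀ hr n.lt_succ_self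
  unfold weight
  calc r ^ n * (1 + ∑ k ∈ Finset.Ico N (n + 1), a k)
      < r ^ (n + 1) * (1 + ∑ k ∈ Finset.Ico N (n + 1), a k) :=
        mul_lt_mul_of_pos_right hpow (by linarith)
    _ ≤ r ^ (n + 1) * (1 + ∑ k ∈ Finset.Ico N (n + 2), a k) := by gcongr

lemma div_weight_le (ha : ∀ n, 0 ≤ a n) (hr : 0 < r) {n : ℕ} (hn : N ≤ n) :
    a n / weight a N r n ≤ r⁻¹ ^ n := by
  have ha_le : a n ≤ ∑ k ∈ Finset.Ico N (n + 1), a k :=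
    Finset.single_le_sum (fun k _ => ha k) (Finset.mem_Ico.2 ⟨hn, n.lt_succ_self⟩)
  rw [div_le_iff₀ (weight_pos ha hr n), weight, inv_pow, ← mul_assoc, inv_mul_cancel₀ (pow_ne_zero n hr.ne'),
    one_mul]
  linarith

lemma summable_div_weight (ha : ∀ n, 0 ≤ a n) (hr : 1 < r) :
    Summable fun n => a n / weight a N r n := by
  have hr0 : 0 < r := one_pos.trans hr
  refine .of_norm_bounded_eventually_nat
    (summable_geometric_of_lt_one (by positivity) (inv_lt_one_of_one_lt₀ hr)) ?_
  filter_upwards [eventually_ge_atTop N] with n hn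
  rw [Real.norm_of_nonneg (div_nonneg (ha n) (weight_pos ha hr0 n).le)]
  exact div_weight_le ha hr0 hn

end weight

lemma exists_strictMono_one_lt_tsum_div {a : ℕ → ℝ} (ha : ∀ n, 0 ≤ a n)
    (h : 1 < ∑' n, ENNReal.ofReal (a n)) :
    ∃ q : ℕ → ℝ, 1 ≤ q 0 ∧ StrictMono q ∧ Tendsto q atTop atTop ∧ 1 < ∑' n, a n / q n := by
  obtain ⟨N, hN⟩ := exists_sum_range_gt_of_one_lt_tsum ha h
  have hpow_lt : ∀ᶠ r in 𝓝[>] (1 : ℝ), r ^ N < ∑ n ∈ Finset.range N, a n :=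
    ((continuous_pow N).tendsto 1).mono_left nhdsWithin_le_nhds |>.eventually
      (eventually_lt_nhds (by simpa using hN))
  obtain ⟨r, hrN, hr⟩ := (hpow_lt.and self_mem_nhdsWithin).exists
  have hr : (1 : ℝ) < r := hr
  have hr0 : 0 < r := one_pos.trans hr
  have hsum := summable_div_weight (N := N) ha hr
  refine ⟨weight a N r, by simpa using pow_le_weight (N := N) ha hr0.le 0,
    weight_strictMono ha hr,
    tendsto_atTop_mono (pow_le_weight ha hr0.le) (tendsto_pow_atTop_atTop_of_one_lt hr), ?_⟩
  calc 1 < (∑ n ∈ Finset.range N, a n) / r ^ N := (one_lt_div (pow_pos hr0 N)).2 hrN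
    _ = ∑ n ∈ Finset.range N, a n / r ^ N := Finset.sum_div _ _ _
    _ ≤ ∑ n ∈ Finset.range N, a n / weight a N r n := by
        refine Finset.sum_le_sum fun n hn => ?_
        rw [weight_of_lt (Finset.mem_range.1 hn)]
        exact div_le_div_of_nonneg_left (ha n) (pow_pos hr0 n)
          (pow_le_pow_right₀ hr.le (Finset.mem_range.1 hn).le)
    _ ≤ ∑' n, a n / weight a N r n :=
        hsum.sum_le_tsum _ fun n _ => div_nonneg (ha n) (weight_pos ha hr0 n).le

lemma exists_isCantorBase_valB_eq_one {a q : ℕ → ℝ} (hq0 : 1 ≤ q 0) (hq : StrictMono q)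
    (hqtop : Tendsto q atTop atTop) (hsum : 1 < ∑' n, a n / q n) :
    ∃ β, IsCantorBase β ∧ valB β a = 1 := by
  set S := ∑' n, a n / q n
  have hS0 : 0 < S := one_pos.trans hsum
  have hqpos n : 0 < q n := one_pos.trans_le (hq0.trans (hq.monotone n.zero_le))
  refine ⟨ratioBase fun n => S * q n,
    isCantorBase_ratioBase (one_lt_mul_of_lt_of_le hsum hq0) (hq.const_mul hS0)
      (hqtop.const_mul_atTop hS0), ?_⟩
  simp_rw [valB, cprod_ratioBase fun n => (mul_pos hS0 (hqpos n)).ne', div_mul_eq_div_div_swap]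
  rw [tsum_div_const, div_self hS0.ne']

end CantorBase

theorem stmt_3 (a : ℕ → ℝ) (ha : ∀ n, 0 ≤ a n) :
    (∃ β : ℕ → ℝ, IsCantorBase β ∧ valB β a = 1) ↔
      1 < ∑' n : ℕ, ENNReal.ofReal (a n) := by
  constructor
  · rintro ⟨β, ⟨hβ, -⟩, hval⟩
    exact CantorBase.one_lt_tsum_ofReal_of_valB_eq_one ha hβ hval
  · intro h
    obtain ⟨q, hq0, hq, hqtop, hsum⟩ := CantorBase.exists_strictMono_one_lt_tsum_div ha h
    exact CantorBase.exists_isCantorBase_valB_eq_one hq0 hq hqtop hsum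
end

section
/- Let β = (β_n) be a Cantor real base and x ∈ [0,1]. Then x = ∑_{n≥0} ε_n(x) / ∏_{i=0}^n β_i, where ε_n(x) are the digits produced by the greedy algorithm; in particular, the greedy algorithm converges. -/
open Filter

/-! The greedy step `β_n r_{n-1} = ε_n + r_n` with `r_n ∈ [0,1)` telescopes to
`x = ∑_{i ≤ n} ε_i / (β_0 ⋯ β_i) + r_n / (β_0 ⋯ β_n)`, and the error term is at most
`1 / (β_0 ⋯ β_n)`, which tends to `0` because `β` is a Cantor real base. -/

lemma cprod_succ (β : ℕ → ℝ) (n : ℕ) : cprod β (n + 1) = cprod β n * β (n + 1) :=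
  Finset.prod_range_succ β (n + 1)

lemma cprod_pos {β : ℕ → ℝ} (hβ : ∀ n, 0 < β n) (n : ℕ) : 0 < cprod β n :=
  Finset.prod_pos fun i _ => hβ i

lemma greedyRem_mem_Ico (β : ℕ → ℝ) (x : ℝ) (n : ℕ) : greedyRem β x n ∈ Set.Ico (0 : ℝ) 1 := by
  cases n <;> exact ⟨Int.fract_nonneg _, Int.fract_lt_one _⟩

lemma natCast_toNat_floor_add_fract {a : ℝ} (ha : 0 ≤ a) :
    ((⌊a⌋.toNat : ℕ) : ℝ) + Int.fract a = a := by
  rw [Int.floor_toNat, natCast_floor_eq_intCast_floor ha, Int.floor_add_fract]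

lemma greedy_zero_add_greedyRem_zero {β : ℕ → ℝ} {x : ℝ} (h : 0 ≤ β 0 * x) :
    (greedy β x 0 : ℝ) + greedyRem β x 0 = β 0 * x :=
  natCast_toNat_floor_add_fract h

lemma greedy_succ_add_greedyRem_succ {β : ℕ → ℝ} (x : ℝ) {n : ℕ} (h : 0 ≤ β (n + 1)) :
    (greedy β x (n + 1) : ℝ) + greedyRem β x (n + 1) = β (n + 1) * greedyRem β x n :=
  natCast_toNat_floor_add_fract (mul_nonneg h (greedyRem_mem_Ico β x n).1)

lemma sum_greedy_div_cprod_add_greedyRem_div_cprod {β : ℕ → ℝ} (hβ : ∀ n, 0 < β n) {x : ℝ}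
    (hx : 0 ≤ x) (n : ℕ) :
    ∑ i ∈ Finset.range (n + 1), (greedy β x i : ℝ) / cprod β i
      + greedyRem β x n / cprod β n = x := by
  induction n with
  | zero =>
    have hstep := greedy_zero_add_greedyRem_zero (mul_nonneg (hβ 0).le hx)
    have hc : cprod β 0 = β 0 := by simp [cprod]
    rw [Finset.sum_range_one, hc, ← add_div, hstep]
    field_simp [(hβ 0).ne']
  | succ n ih =>
    have hstep := greedy_succ_add_greedyRem_succ x (hβ (n + 1)).le
    rw [Finset.sum_range_succ, add_assoc, ← add_div, hstep, cprod_succ, mul_comm (cprod β n),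
      mul_div_mul_left _ _ (hβ (n + 1)).ne', ih]

lemma tendsto_greedyRem_div_cprod {β : ℕ → ℝ} (hβ : Tendsto (cprod β) atTop atTop) (x : ℝ) :
    Tendsto (fun n => greedyRem β x n / cprod β n) atTop (nhds 0) :=
  bdd_le_mul_tendsto_zero (.of_forall fun n => (greedyRem_mem_Ico β x n).1)
    (.of_forall fun n => (greedyRem_mem_Ico β x n).2.le) (tendsto_inv_atTop_zero.comp hβ)

lemma hasSum_greedy_div_cprod {β : ℕ → ℝ} (hβ : IsCantorBase β) {x : ℝ} (hx : 0 ≤ x) :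
    HasSum (fun n => (greedy β x n : ℝ) / cprod β n) x := by
  have hpos : ∀ n, 0 < β n := fun n => one_pos.trans (hβ.1 n)
  rw [hasSum_iff_tendsto_nat_of_nonneg (fun n => by have := cprod_pos hpos n; positivity),
    ← tendsto_add_atTop_iff_nat 1]
  have hsum : ∀ n, ∑ i ∈ Finset.range (n + 1), (greedy β x i : ℝ) / cprod β i
      = x - greedyRem β x n / cprod β n := fun n =>
    eq_sub_of_add_eq (sum_greedy_div_cprod_add_greedyRem_div_cprod hpos hx n)
  simpa only [hsum, sub_zero] using tendsto_const_nhds.sub (tendsto_greedyRem_div_cprod hβ.2 x)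

theorem stmt_4 (β : ℕ → ℝ) (hβ : IsCantorBase β) (x : ℝ)
    (hx : x ∈ Set.Icc (0:ℝ) 1) :
    Summable (fun n => (greedy β x n : ℝ) / cprod β n) ∧ valN β (greedy β x) = x :=
  have h := hasSum_greedy_div_cprod hβ hx.1
  ⟨h.summable, h.tsum_eq⟩
end

section
/- Let α = (α_n) and β = (β_n) be Cantor real bases such that ∏_{i=0}^n α_i ≤ ∏_{i=0}^n β_i for all n ∈ ℕ. Then for all x ∈ [0,1], d_α(x) ≤_lex d_β(x). -/
open Filter

/-!
Write `a = d_α(x)`, `b = d_β(x)` and suppose they first differ at `ℓ` with `b ℓ < a ℓ`.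
The greedy expansion brackets `x` between its partial sums:
`∑_{k ≤ ℓ} a_k / A_k ≤ x < ∑_{k < ℓ} b_k / B_k + (b_ℓ + 1) / B_ℓ`, with `A, B` the partial
products of `α, β`. Since the digits agree below `ℓ` and `A_k ≤ B_k`, the `α`-sum below `ℓ`
dominates the `β`-sum, so `a_ℓ / A_ℓ < (b_ℓ + 1) / B_ℓ ≤ (b_ℓ + 1) / A_ℓ`, i.e. `a_ℓ ≤ b_ℓ`.
-/

lemma cprod_zero (β : ℕ → ℝ) : cprod β 0 = β 0 := by
  simp [cprod]

lemma lexLe_of_not_lexLt {a b : ℕ → ℕ} (h : ¬ LexLt b a) : LexLe a b := by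
  classical
  by_cases hab : a = b
  · exact Or.inr hab
  have hne : ∃ n, a n ≠ b n := Function.ne_iff.1 hab
  have hagree : ∀ k < Nat.find hne, a k = b k := fun k hk => not_not.1 (Nat.find_min hne hk)
  rcases (Nat.find_spec hne).lt_or_gt with hlt | hgt
  · exact Or.inl ⟨_, hagree, hlt⟩
  · exact absurd ⟨_, fun k hk => (hagree k hk).symm, hgt⟩ h

section Greedy

variable {β : ℕ → ℝ} {x : ℝ}

lemma greedyRem_nonneg (β : ℕ → ℝ) (x : ℝ) (n : ℕ) : 0 ≤ greedyRem β x n := by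
  cases n <;> exact Int.fract_nonneg _

lemma greedyRem_lt_one (β : ℕ → ℝ) (x : ℝ) (n : ℕ) : greedyRem β x n < 1 := by
  cases n <;> exact Int.fract_lt_one _

lemma greedy_zero_add_greedyRem (hβ : 0 < β 0) (hx : 0 ≤ x) :
    (greedy β x 0 : ℝ) + greedyRem β x 0 = β 0 * x := by
  rw [greedy, greedyRem, Int.floor_toNat, natCast_floor_eq_intCast_floor (by positivity)]
  ring

lemma greedy_succ_add_greedyRem (n : ℕ) (hβ : 0 < β (n + 1)) :
    (greedy β x (n + 1) : ℝ) + greedyRem β x (n + 1) = β (n + 1) * greedyRem β x n := by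
  have := greedyRem_nonneg β x n
  rw [greedy, greedyRem, Int.floor_toNat, natCast_floor_eq_intCast_floor (by positivity)]
  ring

lemma eq_sum_greedy_add_greedyRem (hβ : ∀ n, 0 < β n) (hx : 0 ≤ x) (n : ℕ) :
    x = ∑ k ∈ Finset.range (n + 1), (greedy β x k : ℝ) / cprod β k
        + greedyRem β x n / cprod β n := by
  induction n with
  | zero =>
    have := greedy_zero_add_greedyRem (hβ 0) hx
    rw [Finset.sum_range_one, cprod_zero]
    field_simp [(hβ 0).ne']
    linarith
  | succ n ih =>
    have := greedy_succ_add_greedyRem (x := x) n (hβ (n + 1))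
    have hprod := (cprod_pos hβ n).ne'
    rw [Finset.sum_range_succ, cprod_succ]
    conv_lhs => rw [ih]
    field_simp [(hβ (n + 1)).ne']
    linarith

lemma sum_greedy_le (hβ : ∀ n, 0 < β n) (hx : 0 ≤ x) (n : ℕ) :
    ∑ k ∈ Finset.range (n + 1), (greedy β x k : ℝ) / cprod β k ≤ x := by
  have := div_nonneg (greedyRem_nonneg β x n) (cprod_pos hβ n).le
  linarith [eq_sum_greedy_add_greedyRem hβ hx n]

lemma lt_sum_greedy_add (hβ : ∀ n, 0 < β n) (hx : 0 ≤ x) (n : ℕ) :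
    x < ∑ k ∈ Finset.range n, (greedy β x k : ℝ) / cprod β k
        + ((greedy β x n : ℝ) + 1) / cprod β n := by
  have hrem : greedyRem β x n / cprod β n < 1 / cprod β n :=
    div_lt_div_of_pos_right (greedyRem_lt_one β x n) (cprod_pos hβ n)
  have := eq_sum_greedy_add_greedyRem hβ hx n
  rw [Finset.sum_range_succ] at this
  rw [add_div]
  linarith

end Greedy

lemma greedy_le_of_forall_lt_eq {α β : ℕ → ℝ} (hα : ∀ n, 0 < α n) (hβ : ∀ n, 0 < β n)
    (h : ∀ n, cprod α n ≤ cprod β n) {x : ℝ} (hx : 0 ≤ x) {ℓ : ℕ}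
    (hagree : ∀ k < ℓ, greedy α x k = greedy β x k) : greedy α x ℓ ≤ greedy β x ℓ := by
  have hsum : ∑ k ∈ Finset.range ℓ, (greedy β x k : ℝ) / cprod β k
      ≤ ∑ k ∈ Finset.range ℓ, (greedy α x k : ℝ) / cprod α k := by
    refine Finset.sum_le_sum fun k hk => ?_
    rw [hagree k (Finset.mem_range.1 hk)]
    exact div_le_div_of_nonneg_left (Nat.cast_nonneg _) (cprod_pos hα k) (h k)
  have hlower := sum_greedy_le hα hx ℓ
  rw [Finset.sum_range_succ] at hlower
  have hupper := lt_sum_greedy_add hβ hx ℓ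
  have hshrink : ((greedy β x ℓ : ℝ) + 1) / cprod β ℓ ≤ ((greedy β x ℓ : ℝ) + 1) / cprod α ℓ :=
    div_le_div_of_nonneg_left (by positivity) (cprod_pos hα ℓ) (h ℓ)
  have hdigit : (greedy α x ℓ : ℝ) / cprod α ℓ < ((greedy β x ℓ : ℝ) + 1) / cprod α ℓ := by
    linarith
  have := (div_lt_div_iff_of_pos_right (cprod_pos hα ℓ)).1 hdigit
  exact Nat.lt_succ_iff.1 (by exact_mod_cast this)

theorem stmt_10 (α β : ℕ → ℝ) (hα : IsCantorBase α) (hβ : IsCantorBase β)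
    (h : ∀ n, cprod α n ≤ cprod β n) (x : ℝ) (hx : x ∈ Set.Icc (0:ℝ) 1) :
    LexLe (greedy α x) (greedy β x) := by
  have hαpos : ∀ n, 0 < α n := fun n => one_pos.trans (hα.1 n)
  have hβpos : ∀ n, 0 < β n := fun n => one_pos.trans (hβ.1 n)
  refine lexLe_of_not_lexLt ?_
  rintro ⟨ℓ, hagree, hlt⟩
  exact (greedy_le_of_forall_lt_eq hαpos hβpos h hx.1 fun k hk => (hagree k hk).symm).not_gt hlt
end
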